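/- arXiv:1108.5500 — 2 statements merged into one kernel-verified Lean document; each statement's English description precedes it below -/
import Mathlib

section
/- Let σ: S^d → S^d be the reflection σ_u(x) = x − 2(u·x)u for a unit vector u with u·O ≠ 0, and let S denote the associated polarization. For all Borel sets A, B ⊆ S^d, m(SA ∩ SB) − m(A ∩ B) = ∫_{S^d} 1_{A∖B}(x) · 1_{B∖A}(σ_u(x)) dm(x); in particular m(SA ∩ SB) ≥ m(A ∩ B). -/
open MeasureTheory Filter Real
open scoped ENNReal symmDiff BigOperators

noncomputable section

/-- Euclidean space `ℝ^{d+1}`. -/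
abbrev Esp (d : ℕ) : Type := EuclideanSpace ℝ (Fin (d + 1))

/-- The unit sphere `𝕊^d ⊆ ℝ^{d+1}`, as a set. -/
def sph (d : ℕ) : Set (Esp d) := Metric.sphere 0 1

/-- The north pole `O`. -/
def npole (d : ℕ) : Esp d := EuclideanSpace.single 0 1

/-- Geodesic distance `δ(x,y) = arccos (x ⬝ y)` on the sphere. -/
def gdist {d : ℕ} (x y : Esp d) : ℝ := Real.arccos (inner ℝ x y : ℝ)

/-- The reflection `σ_u (x) = x - 2 (u ⬝ x) u`. -/
def reflect {d : ℕ} (u x : Esp d) : Esp d := x - (2 * (inner ℝ u x : ℝ)) • u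

/-- The polarization `S_u A` of a set `A` with respect to the reflection `σ_u`. -/
def polarize {d : ℕ} (u : Esp d) (A : Set (Esp d)) : Set (Esp d) :=
  {x | if gdist x (npole d) ≤ gdist (reflect u x) (npole d)
       then x ∈ A ∨ reflect u x ∈ A
       else x ∈ A ∧ reflect u x ∈ A}

/-- `μ` is the uniform (rotation-invariant) Borel probability measure on `𝕊^d`:
it is a probability measure carried by the sphere that is invariant under every
linear isometry of `ℝ^{d+1}`. -/
def IsUniformSphere (d : ℕ) (μ : Measure (Esp d)) : Prop :=
  μ Set.univ = 1 ∧ μ (sph d)ᶜ = 0 ∧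
    ∀ g : Esp d ≃ₗᵢ[ℝ] Esp d, μ.map ⇑g = μ

/-- The polar cap of geodesic radius `r` centered at the north pole. -/
def cap (d : ℕ) (r : ℝ) : Set (Esp d) := {x ∈ sph d | gdist x (npole d) ≤ r}

/-!
Pair every point `x` with its mirror image `σ x`. As `σ` is an involution preserving `m`,
`∫ f = ½ ∫ (f x + f (σ x))`, so it suffices to compare the two sides on each pair `{x, σ x}`.
Since `u ⬝ O ≠ 0`, a point of the sphere with `δ(x, O) = δ(σ x, O)` lies on the mirror, so
every other pair has exactly one member closer to `O`; polarization puts the union of the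
memberships there and the intersection on the other member. The pair therefore gains exactly
one common point of `S A` and `S B` when one member lies in `A ∖ B` and the other in `B ∖ A`,
and nothing otherwise.
-/

section TwoPoint

variable {α : Type*}

def twoPointPolarization (σ : α → α) (H : Set α) (A : Set α) : Set α :=
  H ∩ (A ∪ σ ⁻¹' A) ∪ Hᶜ ∩ (A ∩ σ ⁻¹' A)

variable {σ : α → α} {H : Set α}

local notation "𝟙[" s "]" => Set.indicator s (fun _ => (1 : ℝ≥0∞))

theorem indicator_twoPointPolarization_inter_add {A B : Set α} {x : α} (hx : σ (σ x) = x)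
    (hpair : σ x = x ∨ (x ∈ H ↔ σ x ∉ H)) :
    𝟙[twoPointPolarization σ H A ∩ twoPointPolarization σ H B] x +
        𝟙[twoPointPolarization σ H A ∩ twoPointPolarization σ H B] (σ x) =
      𝟙[A ∩ B] x + 𝟙[A ∩ B] (σ x) +
        (𝟙[A \ B] x * 𝟙[B \ A] (σ x) + 𝟙[A \ B] (σ x) * 𝟙[B \ A] x) := by
  rcases hpair with hfix | hxor
  · rw [hfix]
    by_cases h1 : x ∈ A <;> by_cases h2 : x ∈ B <;> by_cases hH : x ∈ H <;>
      simp [twoPointPolarization, hfix, hH, h1, h2]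
  · have hσx : σ x ∈ H ↔ x ∉ H := by tauto
    by_cases h1 : x ∈ A <;> by_cases h2 : x ∈ B <;> by_cases h3 : σ x ∈ A <;>
      by_cases h4 : σ x ∈ B <;> by_cases hH : x ∈ H <;>
      simp [twoPointPolarization, hx, hσx, hH, h1, h2, h3, h4]

variable [MeasurableSpace α] {μ : Measure α}

theorem MeasurableSet.twoPointPolarization {A : Set α} (hA : MeasurableSet A)
    (hσ : Measurable σ) (hH : MeasurableSet H) : MeasurableSet (twoPointPolarization σ H A) :=
  (hH.inter (hA.union (hσ hA))).union (hH.compl.inter (hA.inter (hσ hA)))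

theorem MeasureTheory.MeasurePreserving.lintegral_add_comp (hσ : MeasurePreserving σ μ μ)
    {f : α → ℝ≥0∞} (hf : Measurable f) :
    ∫⁻ x, f x + f (σ x) ∂μ = 2 * ∫⁻ x, f x ∂μ := by
  rw [lintegral_add_left hf, hσ.lintegral_comp hf, two_mul]

theorem measure_twoPointPolarization_inter (hσ : MeasurePreserving σ μ μ)
    (hinv : Function.Involutive σ) (hH : MeasurableSet H) {A B : Set α}
    (hA : MeasurableSet A) (hB : MeasurableSet B)
    (hpair : ∀ᵐ x ∂μ, σ x = x ∨ (x ∈ H ↔ σ x ∉ H)) :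
    μ (twoPointPolarization σ H A ∩ twoPointPolarization σ H B) =
      μ (A ∩ B) + ∫⁻ x, 𝟙[A \ B] x * 𝟙[B \ A] (σ x) ∂μ := by
  set P := twoPointPolarization σ H A ∩ twoPointPolarization σ H B
  set g := fun x => 𝟙[A \ B] x * 𝟙[B \ A] (σ x)
  have hP : MeasurableSet P := (hA.twoPointPolarization hσ.measurable hH).inter
    (hB.twoPointPolarization hσ.measurable hH)
  have hAB : Measurable 𝟙[A ∩ B] := measurable_const.indicator (hA.inter hB)
  have hg : Measurable g := (measurable_const.indicator (hA.diff hB)).mul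
    ((measurable_const.indicator (hB.diff hA)).comp hσ.measurable)
  have hpt : ∀ᵐ x ∂μ, 𝟙[P] x + 𝟙[P] (σ x) = (𝟙[A ∩ B] + g) x + (𝟙[A ∩ B] + g) (σ x) :=
    hpair.mono fun x hx => by
      rw [indicator_twoPointPolarization_inter_add (hinv x) hx]
      simp only [Pi.add_apply, g, hinv x]
      ring
  have h2 := lintegral_congr_ae hpt
  rw [hσ.lintegral_add_comp (measurable_const.indicator hP),
    hσ.lintegral_add_comp (hAB.add hg), lintegral_indicator_const hP, Pi.add_def,
    lintegral_add_left hAB, lintegral_indicator_const (hA.inter hB), one_mul, one_mul] at h2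
  exact (ENNReal.mul_right_inj two_ne_zero ENNReal.ofNat_ne_top).mp h2

end TwoPoint

section Sphere

variable {d : ℕ}

def nearPole (u : Esp d) : Set (Esp d) :=
  {x | gdist x (npole d) ≤ gdist (reflect u x) (npole d)}

theorem polarize_eq_twoPointPolarization (u : Esp d) (A : Set (Esp d)) :
    polarize u A = twoPointPolarization (reflect u) (nearPole u) A := by
  ext x
  simp only [polarize, twoPointPolarization, nearPole, Set.mem_ofPred_eq, Set.mem_union,
    Set.mem_inter_iff, Set.mem_compl_iff, Set.mem_preimage]
  split_ifs with h <;> simp [h]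

theorem reflect_eq_reflection {u : Esp d} (hu : ‖u‖ = 1) :
    reflect u = (ℝ ∙ u)ᗮ.reflection := by
  funext x
  rw [Submodule.reflection_orthogonal_apply, Submodule.reflection_singleton_apply, hu, reflect]
  simp only [RCLike.ofReal_real_eq_id, id_eq, one_pow, div_one, neg_sub, sub_right_inj]
  module

theorem reflect_involutive {u : Esp d} (hu : ‖u‖ = 1) : Function.Involutive (reflect u) := by
  rw [reflect_eq_reflection hu]
  exact Submodule.reflection_involutive _

theorem reflect_mem_sph {u x : Esp d} (hu : ‖u‖ = 1) (hx : x ∈ sph d) : reflect u x ∈ sph d := by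
  simpa [sph, reflect_eq_reflection hu] using hx

theorem inner_reflect_left (u x y : Esp d) :
    inner ℝ (reflect u x) y = inner ℝ x y - 2 * inner ℝ u x * inner ℝ u y := by
  rw [reflect, inner_sub_left, real_inner_smul_left]

theorem inner_eq_of_gdist_eq {x y z : Esp d} (hx : x ∈ sph d) (hy : y ∈ sph d)
    (hz : z ∈ sph d) (h : gdist x z = gdist y z) : inner ℝ x z = inner ℝ y z := by
  have hbound : ∀ w ∈ sph d, |(inner ℝ w z : ℝ)| ≤ 1 := fun w hw => by
    simpa [sph, mem_sphere_zero_iff_norm.mp hw, mem_sphere_zero_iff_norm.mp hz] using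
      abs_real_inner_le_norm w z
  have hx' := abs_le.mp (hbound x hx)
  have hy' := abs_le.mp (hbound y hy)
  exact (Real.arccos_inj hx'.1 hx'.2 hy'.1 hy'.2).mp h

theorem reflect_eq_self_of_gdist_eq {u x : Esp d} (hu : ‖u‖ = 1)
    (huO : (inner ℝ u (npole d) : ℝ) ≠ 0) (hx : x ∈ sph d)
    (h : gdist (reflect u x) (npole d) = gdist x (npole d)) : reflect u x = x := by
  have hO : npole d ∈ sph d := by simp [sph, npole]
  have hinner := inner_eq_of_gdist_eq (reflect_mem_sph hu hx) hx hO h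
  rw [inner_reflect_left] at hinner
  have hux : (inner ℝ u x : ℝ) = 0 := by
    have : 2 * inner ℝ u x * inner ℝ u (npole d) = 0 := by linarith
    simpa [huO] using this
  simp [reflect, hux]

theorem reflect_eq_self_or_mem_nearPole_iff {u x : Esp d} (hu : ‖u‖ = 1)
    (huO : (inner ℝ u (npole d) : ℝ) ≠ 0) (hx : x ∈ sph d) :
    reflect u x = x ∨ (x ∈ nearPole u ↔ reflect u x ∉ nearPole u) := by
  simp only [nearPole, Set.mem_ofPred_eq, reflect_involutive hu x, not_le]
  rcases lt_trichotomy (gdist x (npole d)) (gdist (reflect u x) (npole d)) with hlt | heq | hgt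
  · exact .inr (iff_of_true hlt.le hlt)
  · exact .inl (reflect_eq_self_of_gdist_eq hu huO hx heq.symm)
  · exact .inr (iff_of_false hgt.not_ge (lt_asymm hgt))

theorem measurableSet_nearPole (u : Esp d) : MeasurableSet (nearPole u) :=
  (isClosed_le (by unfold gdist; fun_prop) (by unfold gdist reflect; fun_prop)).measurableSet

end Sphere

theorem polarize_inter_eq_general {d : ℕ} (μ : Measure (Esp d)) (hμ : IsUniformSphere d μ)
    (u : Esp d) (hu : ‖u‖ = 1) (huO : (inner ℝ u (npole d) : ℝ) ≠ 0)
    (A B : Set (Esp d))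
    (hAm : MeasurableSet A) (hBm : MeasurableSet B) :
    μ (polarize u A ∩ polarize u B) =
      μ (A ∩ B) + ∫⁻ x, (A \ B).indicator (fun _ => (1 : ℝ≥0∞)) x *
        (B \ A).indicator (fun _ => (1 : ℝ≥0∞)) (reflect u x) ∂μ ∧
    μ (A ∩ B) ≤ μ (polarize u A ∩ polarize u B) := by
  obtain ⟨-, hsph, hrot⟩ := hμ
  have hσ : MeasurePreserving (reflect u) μ μ := by
    rw [reflect_eq_reflection hu]
    exact ⟨(Submodule.reflection _).continuous.measurable, hrot _⟩
  have hae_sph : ∀ᵐ x ∂μ, x ∈ sph d := mem_ae_iff.mpr hsph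
  have hpair : ∀ᵐ x ∂μ, reflect u x = x ∨ (x ∈ nearPole u ↔ reflect u x ∉ nearPole u) :=
    hae_sph.mono fun x hx => reflect_eq_self_or_mem_nearPole_iff hu huO hx
  have h := measure_twoPointPolarization_inter hσ (reflect_involutive hu)
    (measurableSet_nearPole u) hAm hBm hpair
  rw [← polarize_eq_twoPointPolarization, ← polarize_eq_twoPointPolarization] at h
  exact ⟨h, h ▸ le_self_add⟩

/-- For a reflection `σ_u` whose hyperplane does not pass through the
north pole, and Borel sets `A, B ⊆ 𝕊^d`,
`m(S_u A ∩ S_u B) - m(A ∩ B) = ∫ 1_{A∖B}(x) 1_{B∖A}(σ_u x) dm(x)`;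
in particular `m(S_u A ∩ S_u B) ≥ m(A ∩ B)`. -/
theorem polarize_inter_eq {d : ℕ} (μ : Measure (Esp d)) (hμ : IsUniformSphere d μ)
    (u : Esp d) (hu : ‖u‖ = 1) (huO : (inner ℝ u (npole d) : ℝ) ≠ 0)
    (A B : Set (Esp d)) (hA : A ⊆ sph d) (hB : B ⊆ sph d)
    (hAm : MeasurableSet A) (hBm : MeasurableSet B) :
    μ (polarize u A ∩ polarize u B) =
      μ (A ∩ B) + ∫⁻ x, (A \ B).indicator (fun _ => (1 : ℝ≥0∞)) x *
        (B \ A).indicator (fun _ => (1 : ℝ≥0∞)) (reflect u x) ∂μ ∧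
    μ (A ∩ B) ≤ μ (polarize u A ∩ polarize u B) :=
  polarize_inter_eq_general μ hμ u hu huO A B hAm hBm
end
end

section
/- Let d = 1, fix x ∈ S^1, and let U be uniformly distributed on S^1. Then σ_U(x) is uniformly distributed on S^1, and for every β ∈ [0,π], P(δ(τ_U(x),O) > β) = 1_{δ(x,O) > β} · (1 − β/π). -/
open MeasureTheory Filter Real
open scoped ENNReal symmDiff BigOperators

noncomputable section

/-- Iterated polarization: `polarizeSeq us A n = S_{u_{n-1}} ∘ ⋯ ∘ S_{u_0} A`. -/
def polarizeSeq {d : ℕ} (us : ℕ → Esp d) (A : Set (Esp d)) : ℕ → Set (Esp d)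
  | 0 => A
  | n + 1 => polarize (us n) (polarizeSeq us A n)

/-- The compression `τ_u` associated with the reflection `σ_u`. -/
def compress {d : ℕ} (u x : Esp d) : Esp d :=
  if gdist x (npole d) ≤ gdist (reflect u x) (npole d) then x else reflect u x

/-- Iterated compression: `compressSeq us x n = τ_{u_{n-1}} ∘ ⋯ ∘ τ_{u_0} x`. -/
def compressSeq {d : ℕ} (us : ℕ → Esp d) (x : Esp d) : ℕ → Esp d
  | 0 => x
  | n + 1 => compress (us n) (compressSeq us x n)

/-!
In complex coordinates the reflection is `σ_u(x) = -u² x̄`, so `u ↦ σ_u(x)` is the squaring map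
followed by a rotation. Parametrising the circle by `ℝ/2πℤ`, a rotation-invariant probability
measure on the circle pulls back to a translation-invariant one on `ℝ/2πℤ`, hence is the image of
its normalised Haar measure, which is preserved by `θ ↦ 2θ + θ₀`; so `σ_U(x)` is uniform.
Moreover `δ(τ_u(x), O) = min(δ(x, O), δ(σ_u(x), O))`, so for `β < δ(x, O)` the event is that the
uniform point `σ_U(x)` lies outside the cap of radius `β`, i.e. that `θ ∈ ℝ/2πℤ` lies outside the
ball of radius `β` around `0`, which has measure `2β / 2π`.
-/

instance : Fact (0 < 2 * π) := ⟨two_pi_pos⟩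

theorem gdist_compress {d : ℕ} (u x : Esp d) :
    gdist (compress u x) (npole d) = min (gdist x (npole d)) (gdist (reflect u x) (npole d)) := by
  unfold compress
  split_ifs with h
  · exact (min_eq_left h).symm
  · exact (min_eq_right (not_le.1 h).le).symm

theorem MeasureTheory.Measure.eq_of_isAddLeftInvariant_of_isProbabilityMeasure {G : Type*}
    [AddGroup G] [TopologicalSpace G] [IsTopologicalAddGroup G] [CompactSpace G]
    [MeasurableSpace G] [BorelSpace G] (μ' μ : Measure G) [IsProbabilityMeasure μ]
    [IsProbabilityMeasure μ'] [μ.IsAddHaarMeasure] [μ'.IsAddLeftInvariant] : μ' = μ := by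
  have h := Measure.isAddInvariant_eq_smul_of_compactSpace μ' μ
  have h1 : μ'.addHaarScalarFactor μ = 1 := by
    simpa using (congrArg (· Set.univ) h).symm
  rwa [h1, one_smul] at h

theorem continuous_reflect_left {d : ℕ} (x : Esp d) : Continuous fun u => reflect u x := by
  unfold reflect
  fun_prop

section ComplexModel

open Complex ComplexConjugate

theorem Complex.sub_two_inner_smul_eq {a b : ℂ} (ha : ‖a‖ = 1) :
    b - (2 * inner ℝ a b) • a = -(a * a * conj b) := by
  have ha' : a * conj a = 1 := by rw [mul_conj', ha]; norm_num
  have hre : ((inner ℝ a b : ℝ) : ℂ) * 2 = b * conj a + a * conj b := by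
    have h := add_conj (b * conj a)
    rw [map_mul, conj_conj] at h
    rw [Complex.inner]
    push_cast at h
    linear_combination -h
  rw [real_smul, ofReal_mul, ofReal_ofNat]
  linear_combination (-a) * hre - b * ha'

abbrev toComplex : Esp 1 ≃ₗᵢ[ℝ] ℂ := orthonormalBasisOneI.repr.symm

theorem gdist_npole_eq_arccos_re (y : Esp 1) : gdist y (npole 1) = arccos (toComplex y).re := by
  rw [gdist, ← toComplex.inner_map_map y (npole 1), Complex.inner]
  simp [npole]

theorem toComplex_reflect {u : Esp 1} (hu : u ∈ sph 1) (x : Esp 1) :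
    toComplex (reflect u x) = -conj (toComplex x) * toComplex u ^ 2 := by
  have hu' : ‖toComplex u‖ = 1 := by simpa [sph] using hu
  rw [reflect, map_sub, map_smul, ← toComplex.inner_map_map, sub_two_inner_smul_eq hu']
  ring

end ComplexModel

section UniformCircle

open Metric

def circleParam (θ : AddCircle (2 * π)) : ℂ := AddCircle.homeomorphCircle' θ

theorem circleParam_coe (x : ℝ) : circleParam x = Complex.exp (x * Complex.I) :=
  Circle.coe_exp x

theorem circleParam_add (θ φ : AddCircle (2 * π)) :
    circleParam (θ + φ) = circleParam θ * circleParam φ := by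
  induction θ using QuotientAddGroup.induction_on
  induction φ using QuotientAddGroup.induction_on
  simp only [← AddCircle.coe_add, circleParam_coe, Complex.ofReal_add, add_mul, Complex.exp_add]

theorem measurableEmbedding_circleParam : MeasurableEmbedding circleParam :=
  (Continuous.isClosedEmbedding
    (continuous_subtype_val.comp AddCircle.homeomorphCircle'.continuous)
    (Circle.coe_injective.comp AddCircle.homeomorphCircle'.injective)).measurableEmbedding

theorem range_circleParam : Set.range circleParam = sphere 0 1 := by
  ext z
  constructor
  · rintro ⟨θ, rfl⟩
    exact (AddCircle.homeomorphCircle' θ).2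
  · intro hz
    obtain ⟨θ, hθ⟩ := AddCircle.homeomorphCircle'.surjective (⟨z, hz⟩ : Circle)
    exact ⟨θ, congrArg ((↑) : Circle → ℂ) hθ⟩

theorem arccos_re_circleParam (θ : AddCircle (2 * π)) :
    arccos (circleParam θ).re = ‖θ‖ := by
  induction θ using QuotientAddGroup.induction_on with
  | H x =>
    set n := round ((2 * π)⁻¹ * x)
    have hn : |x - n * (2 * π)| ≤ π := by
      have h := abs_sub_round ((2 * π)⁻¹ * x)
      have : x - n * (2 * π) = (2 * π) * ((2 * π)⁻¹ * x - n) := by field_simp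
      rw [this, abs_mul, abs_of_pos two_pi_pos]
      nlinarith [pi_pos]
    rw [circleParam_coe, Complex.exp_ofReal_mul_I_re, AddCircle.norm_eq,
      ← cos_sub_int_mul_two_pi x n, ← cos_abs, arccos_cos (abs_nonneg _) hn]

def uniformCircle : Measure ℂ := AddCircle.haarAddCircle.map circleParam

theorem eq_uniformCircle_of_map_mul_left (ν : Measure ℂ) [IsProbabilityMeasure ν]
    (hν : ν (sphere 0 1)ᶜ = 0) (hinv : ∀ c : Circle, ν.map ((c : ℂ) * ·) = ν) :
    ν = uniformCircle := by
  have hemb := measurableEmbedding_circleParam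
  set ρ := ν.comap circleParam
  have hmap : ρ.map circleParam = ν := by
    rw [hemb.map_comap, range_circleParam]
    exact Measure.restrict_eq_self_of_ae_mem (ae_iff.2 hν)
  have : IsProbabilityMeasure ρ := ⟨by
    rw [← Set.preimage_univ (f := circleParam), ← Measure.map_apply hemb.measurable .univ, hmap,
      measure_univ]⟩
  have : ρ.IsAddLeftInvariant := ⟨fun a => by
    have hshift : (ρ.map (a + ·)).map circleParam = ν := by
      rw [Measure.map_map hemb.measurable (measurable_const_add a),
        show circleParam ∘ (a + ·) = (circleParam a * ·) ∘ circleParam from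
          funext (circleParam_add a),
        ← Measure.map_map (measurable_const_mul _) hemb.measurable, hmap]
      exact hinv (AddCircle.homeomorphCircle' a)
    rw [← hemb.comap_map (ρ.map (a + ·)), hshift]⟩
  rw [← hmap, uniformCircle,
    Measure.eq_of_isAddLeftInvariant_of_isProbabilityMeasure ρ AddCircle.haarAddCircle]

theorem uniformCircle_map_const_mul_sq (c : Circle) :
    uniformCircle.map (fun z => (c : ℂ) * z ^ 2) = uniformCircle := by
  obtain ⟨θ₀, rfl⟩ := AddCircle.homeomorphCircle'.surjective c
  have hcomp : (fun z => (AddCircle.homeomorphCircle' θ₀ : ℂ) * z ^ 2) ∘ circleParam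
      = circleParam ∘ (fun θ => θ₀ + (2 : ℤ) • θ) := by
    funext θ
    simp only [Function.comp_apply, circleParam_add, two_zsmul, sq]
    rfl
  have hpres : MeasurePreserving (fun θ => θ₀ + (2 : ℤ) • θ) AddCircle.haarAddCircle
      AddCircle.haarAddCircle := (measurePreserving_add_left AddCircle.haarAddCircle θ₀).comp
    (Measure.measurePreserving_zsmul AddCircle.haarAddCircle two_ne_zero)
  rw [uniformCircle, Measure.map_map (by fun_prop) measurableEmbedding_circleParam.measurable,
    hcomp, ← Measure.map_map measurableEmbedding_circleParam.measurable hpres.measurable,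
    hpres.map_eq]

theorem measurableSet_lt_arccos_re (β : ℝ) : MeasurableSet {z : ℂ | β < arccos z.re} :=
  measurableSet_lt measurable_const (continuous_arccos.comp Complex.continuous_re).measurable

theorem uniformCircle_real_lt_arccos_re {β : ℝ} (hβ : β ∈ Set.Icc 0 π) :
    uniformCircle.real {z | β < arccos z.re} = 1 - β / π := by
  have hpre : circleParam ⁻¹' {z | β < arccos z.re} = (closedBall 0 β)ᶜ := by
    ext θ
    simp [arccos_re_circleParam]
  have hball : AddCircle.haarAddCircle.real (closedBall (0 : AddCircle (2 * π)) β)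
      = β / π := by
    have h := congrArg ENNReal.toReal (AddCircle.volume_closedBall (T := 2 * π) (x := 0) β)
    rw [AddCircle.volume_eq_smul_haarAddCircle, Measure.smul_apply, smul_eq_mul,
      ENNReal.toReal_mul, ENNReal.toReal_ofReal two_pi_pos.le,
      min_eq_right (by linarith [hβ.2]), ENNReal.toReal_ofReal (by linarith [hβ.1])] at h
    rw [measureReal_def]
    field_simp
    linarith
  rw [uniformCircle, map_measureReal_apply measurableEmbedding_circleParam.measurable
    (measurableSet_lt_arccos_re β), hpre,
    measureReal_compl measurableSet_closedBall, probReal_univ, hball]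

end UniformCircle

section Sphere

open ComplexConjugate

theorem measurableEmbedding_toComplex : MeasurableEmbedding toComplex :=
  toComplex.toHomeomorph.measurableEmbedding

theorem map_toComplex_eq_uniformCircle {μ : Measure (Esp 1)} (hμ : IsUniformSphere 1 μ) :
    μ.map toComplex = uniformCircle := by
  obtain ⟨hμ1, hμsph, hμinv⟩ := hμ
  have : IsProbabilityMeasure μ := ⟨hμ1⟩
  have hmeas := measurableEmbedding_toComplex.measurable
  have : IsProbabilityMeasure (μ.map toComplex) :=
    Measure.isProbabilityMeasure_map hmeas.aemeasurable
  refine eq_uniformCircle_of_map_mul_left _ ?_ fun c => ?_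
  · rw [Measure.map_apply hmeas Metric.isClosed_sphere.measurableSet.compl]
    convert hμsph using 2
    ext y
    simp [sph]
  · have hrot : ((c : ℂ) * ·) ∘ toComplex
        = toComplex ∘ ((toComplex.trans (rotation c)).trans toComplex.symm) := by
      funext y
      simp
    rw [Measure.map_map (measurable_const_mul _) hmeas, hrot,
      ← Measure.map_map hmeas (LinearIsometryEquiv.continuous _).measurable, hμinv]

theorem map_reflect_eq_self {μ : Measure (Esp 1)} (hμ : IsUniformSphere 1 μ) {x : Esp 1}
    (hx : x ∈ sph 1) : μ.map (fun u => reflect u x) = μ := by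
  have hemb := measurableEmbedding_toComplex
  set c : Circle := ⟨-conj (toComplex x), by simpa [Submonoid.unitSphere, sph] using hx⟩
  have hae : toComplex ∘ (fun u => reflect u x) =ᵐ[μ] (fun z => (c : ℂ) * z ^ 2) ∘ toComplex := by
    filter_upwards [ae_iff.2 hμ.2.1] with u hu
    exact toComplex_reflect hu x
  apply hemb.map_injective
  rw [Measure.map_map hemb.measurable (continuous_reflect_left x).measurable,
    Measure.map_congr hae, ← Measure.map_map (by fun_prop) hemb.measurable, map_toComplex_eq_uniformCircle hμ,
    uniformCircle_map_const_mul_sq]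

end Sphere

/-- For `d = 1`, `x ∈ 𝕊¹` fixed and `U` uniform on `𝕊¹`, the reflected
point `σ_U(x)` is uniformly distributed on `𝕊¹`, and
`P(δ(τ_U(x),O) > β) = 1_{δ(x,O) > β} (1 − β/π)` for every `β ∈ [0,π]`. -/
theorem circle_case (μ : Measure (Esp 1)) (hμ : IsUniformSphere 1 μ)
    (x : Esp 1) (hx : x ∈ sph 1) :
    μ.map (fun u => reflect u x) = μ ∧
    ∀ β ∈ Set.Icc (0:ℝ) π,
      (μ {u | β < gdist (compress u x) (npole 1)}).toReal =
        if β < gdist x (npole 1) then 1 - β / π else 0 := by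
  have hσ := map_reflect_eq_self hμ hx
  refine ⟨hσ, fun β hβ => ?_⟩
  simp_rw [gdist_compress, lt_min_iff]
  split_ifs with hβx
  · have hS := measurableSet_lt_arccos_re β
    have hcap : {u | β < gdist (reflect u x) (npole 1)}
        = (fun u => reflect u x) ⁻¹' (toComplex ⁻¹' {z | β < arccos z.re}) := by
      ext u
      simp [gdist_npole_eq_arccos_re]
    have hemb := measurableEmbedding_toComplex
    simp only [hβx, true_and]
    rw [← measureReal_def, hcap,
      ← map_measureReal_apply (continuous_reflect_left x).measurable (hemb.measurable hS), hσ,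
      ← map_measureReal_apply hemb.measurable hS, map_toComplex_eq_uniformCircle hμ,
      uniformCircle_real_lt_arccos_re hβ]
  · simp [hβx]
end
end
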